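/- Let α > −1, let q ≥ 0 be an integer, and let n ≥ 1 be an integer. Then for every real x, d/dx P_{2n}^{α,q}(x) = 2n · x · P_{2n−2}^{α+1,q+1}(x). -/

import Mathlib

open MeasureTheory intervalIntegral Polynomial

/-- Pochhammer symbol `(a)_k = a (a+1) ⋯ (a+k-1)`. -/
noncomputable def poch (a : ℝ) (k : ℕ) : ℝ := ∏ i ∈ Finset.range k, (a + i)

/-- `Peven α q n x = P_{2n}^{α,q}(x)`, the monic generalized Gegenbauer-type polynomial
`Σ_{k=0}^{n} (−n)_k (−n−q−1/2)_k / (k! (−2n−α−q−1/2)_k) x^{2n−2k}`. -/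
noncomputable def Peven (α : ℝ) (q n : ℕ) (x : ℝ) : ℝ :=
  ∑ k ∈ Finset.range (n + 1),
    poch (-(n : ℝ)) k * poch (-(n : ℝ) - q - 1/2) k /
      ((Nat.factorial k : ℝ) * poch (-(2 * (n : ℝ)) - α - q - 1/2) k) * x ^ (2*n - 2*k)

/-- `Podd α q n x = P_{2n+1}^{α,q}(x) = (1+x) P_{2n}^{α+1,q}(x)`. -/
noncomputable def Podd (α : ℝ) (q n : ℕ) (x : ℝ) : ℝ := (1 + x) * Peven (α + 1) q n x

/-- `P α q n x = P_n^{α,q}(x)`. -/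
noncomputable def P (α : ℝ) (q : ℕ) (n : ℕ) (x : ℝ) : ℝ :=
  if Even n then Peven α q (n / 2) x else Podd α q (n / 2) x

/-!
Differentiating `x ^ (2n - 2k)` brings down the factor `2(n - k)`, and
`(-n)_k (n - k) = n (-(n-1))_k` turns the coefficient of `P_{2n}^{α,q}` into `n` times that of
`P_{2n-2}^{α+1,q+1}`; the two other Pochhammer parameters are unchanged under
`(n, α, q) ↦ (n - 1, α + 1, q + 1)`. The constant term (`k = n`) drops out.
-/

open Finset

lemma poch_succ (a : ℝ) (k : ℕ) : poch a (k + 1) = a * poch (a + 1) k := by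
  unfold poch
  rw [prod_range_succ', mul_comm]
  congr 1
  · simp
  · refine prod_congr rfl fun i _ => ?_
    push_cast
    ring

lemma poch_neg_mul_sub (n : ℝ) (k : ℕ) : poch (-n) k * (n - k) = n * poch (-(n - 1)) k := by
  have h : poch (-n) k * (-n + k) = -n * poch (-n + 1) k := by
    rw [← poch_succ]
    exact (prod_range_succ _ _).symm
  rw [show -(n - 1) = -n + 1 by ring]
  linear_combination -h

noncomputable def PevenCoeff (α : ℝ) (q n k : ℕ) : ℝ :=
  poch (-(n : ℝ)) k * poch (-(n : ℝ) - q - 1/2) k /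
    ((Nat.factorial k : ℝ) * poch (-(2 * (n : ℝ)) - α - q - 1/2) k)

lemma Peven_eq_sum (α : ℝ) (q n : ℕ) (x : ℝ) :
    Peven α q n x = ∑ k ∈ range (n + 1), PevenCoeff α q n k * x ^ (2 * n - 2 * k) :=
  rfl

lemma Peven_zero (α : ℝ) (q : ℕ) : Peven α q 0 = fun _ => 1 := by
  funext x
  simp [Peven_eq_sum, PevenCoeff, poch]

lemma PevenCoeff_succ_mul (α : ℝ) (q m k : ℕ) :
    PevenCoeff α q (m + 1) k * (2 * ((m : ℝ) + 1 - k)) =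
      2 * ((m : ℝ) + 1) * PevenCoeff (α + 1) (q + 1) m k := by
  have hpoch := poch_neg_mul_sub ((m : ℝ) + 1) k
  rw [add_sub_cancel_right] at hpoch
  unfold PevenCoeff
  push_cast
  rw [show -(2 * ((m : ℝ) + 1)) - α - q - 1 / 2 = -(2 * (m : ℝ)) - (α + 1) - (q + 1) - 1 / 2 by
      ring,
    show -((m : ℝ) + 1) - q - 1 / 2 = -(m : ℝ) - (q + 1) - 1 / 2 by ring]
  linear_combination (2 * poch (-(m : ℝ) - (q + 1) - 1 / 2) k /
    ((Nat.factorial k : ℝ) * poch (-(2 * (m : ℝ)) - (α + 1) - (q + 1) - 1 / 2) k)) * hpoch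

theorem hasDerivAt_Peven_succ (α : ℝ) (q m : ℕ) (x : ℝ) :
    HasDerivAt (Peven α q (m + 1)) (2 * ((m : ℝ) + 1) * x * Peven (α + 1) (q + 1) m x) x := by
  have hsplit : Peven α q (m + 1) = fun y =>
      (∑ k ∈ range (m + 1), PevenCoeff α q (m + 1) k * y ^ (2 * (m - k) + 2)) +
        PevenCoeff α q (m + 1) (m + 1) := by
    funext y
    rw [Peven_eq_sum, sum_range_succ, Nat.sub_self, pow_zero, mul_one]
    congr 1
    refine sum_congr rfl fun k hk => ?_
    have hk : k ≤ m := Nat.lt_succ_iff.mp (mem_range.mp hk)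
    congr 2
    omega
  rw [hsplit, Peven_eq_sum, mul_sum]
  refine ((HasDerivAt.fun_sum fun k _ =>
    (hasDerivAt_pow _ x).const_mul _).add_const _).congr_deriv (sum_congr rfl fun k hk => ?_)
  have hk : k ≤ m := Nat.lt_succ_iff.mp (mem_range.mp hk)
  have hcoeff := PevenCoeff_succ_mul α q m k
  rw [show 2 * (m - k) + 2 - 1 = 2 * m - 2 * k + 1 by omega, pow_succ]
  push_cast [hk]
  linear_combination (x * x ^ (2 * m - 2 * k)) * hcoeff

theorem deriv_Peven_general (α : ℝ) (q : ℕ) (n : ℕ) :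
    ∀ x : ℝ,
      deriv (Peven α q n) x = 2 * (n : ℝ) * x * Peven (α + 1) (q + 1) (n - 1) x := by
  intro x
  cases n with
  | zero => simp [Peven_zero]
  | succ m => simpa using (hasDerivAt_Peven_succ α q m x).deriv

/-- Derivative formula: `(P_{2n}^{α,q})'(x) = 2n·x·P_{2n−2}^{α+1,q+1}(x)`. -/
theorem deriv_Peven (α : ℝ) (hα : -1 < α) (q : ℕ) (n : ℕ) (hn : 1 ≤ n) :
    ∀ x : ℝ,
      deriv (Peven α q n) x = 2 * (n : ℝ) * x * Peven (α + 1) (q + 1) (n - 1) x :=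
  deriv_Peven_general α q n
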